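/- arXiv:2005.12940 — 2 statements merged into one kernel-verified Lean document; each statement's English description precedes it below -/
import Mathlib

section
/- Combining the FCT estimator with clipping: let θ ∈ ℝ^q, let θ̂ and w be as in the DREM estimator (θ̂' = γΔ(𝒴 − Δθ̂) with 𝒴 = Δθ, w' = −γΔ²w, w(0)=1), suppose Δ is continuous with Δ(t) ≥ ε > 0 for t > 0, and define the clipped signal w_c(t) = min(w(t), 1−μ) for μ ∈ (0,1). Then there exists t_c > 0 such that for all t > t_c, (1/(1 − w_c(t)))·(θ̂(t) − w_c(t)·θ̂(0)) = θ. -/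
open Filter Topology MeasureTheory

/- After the integrating factor `exp (∫₀ᵗ γ Δ²)`, both `w` and `θ̂ - θ` solve the same scalar
linear equation `x' = -γ Δ² x`, so `θ̂ t - θ = w t • (θ̂ 0 - θ)`. Since `Δ ≥ ε` the exponent grows
at least like `γ ε² t`, hence `w t → 0`: from some time on the clip is inactive, `w_c = w ≠ 1`,
and solving the identity for `θ` gives the claim. -/

theorem eq_exp_neg_integral_smul_of_hasDerivAt {E : Type*} [NormedAddCommGroup E]
    [NormedSpace ℝ E] {a : ℝ → ℝ} (ha : Continuous a) {f : ℝ → E}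
    (hf : ∀ t, 0 ≤ t → HasDerivAt f (-a t • f t) t) {t : ℝ} (ht : 0 ≤ t) :
    f t = Real.exp (-∫ s in (0 : ℝ)..t, a s) • f 0 := by
  set A : ℝ → ℝ := fun t => ∫ s in (0 : ℝ)..t, a s
  have hderiv : ∀ s, 0 ≤ s → HasDerivAt (fun s => Real.exp (A s) • f s) 0 s := fun s hs =>
    (((ha.integral_hasStrictDerivAt 0 s).hasDerivAt.exp).smul (hf s hs)).congr_deriv
      (by module)
  have hconst := constant_of_has_deriv_right_zero
    (fun s hs => (hderiv s hs.1).continuousAt.continuousWithinAt)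
    (fun s hs => (hderiv s hs.1).hasDerivWithinAt) t ⟨ht, le_rfl⟩
  simp only [A, intervalIntegral.integral_same, Real.exp_zero, one_smul] at hconst
  rw [Real.exp_neg, ← hconst, inv_smul_smul₀ (Real.exp_pos _).ne']

theorem tendsto_integral_atTop_of_le {a : ℝ → ℝ} {c : ℝ}
    (ha : ∀ t, IntervalIntegrable a volume 0 t) (hc : 0 < c) (hca : ∀ s, 0 < s → c ≤ a s) :
    Tendsto (fun t => ∫ s in (0 : ℝ)..t, a s) atTop atTop := by
  refine tendsto_atTop_mono' atTop ?_ (tendsto_id.const_mul_atTop hc)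
  filter_upwards [eventually_ge_atTop 0] with t ht
  calc c * t = ∫ _ in (0 : ℝ)..t, c := by simp [mul_comm]
    _ ≤ ∫ s in (0 : ℝ)..t, a s :=
      intervalIntegral.integral_mono_on_of_le_Ioo ht intervalIntegrable_const
        (ha t) fun s hs => hca s hs.1

theorem inv_one_sub_smul_sub_smul_eq {K E : Type*} [Field K] [AddCommGroup E] [Module K E]
    {w : K} {x x₀ θ : E} (hw : w ≠ 1) (hx : x - θ = w • (x₀ - θ)) :
    (1 - w)⁻¹ • (x - w • x₀) = θ := by
  have : x - w • x₀ = (1 - w) • θ := by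
    rw [sub_eq_iff_eq_add.1 hx]
    module
  rw [this, smul_smul, inv_mul_cancel₀ (sub_ne_zero.2 hw.symm), one_smul]

/-- FCT estimator with clipping: with the DREM estimator `θ̂' = γΔ(𝒴 − Δθ̂)`,
`𝒴 = Δθ`, `w' = −γΔ²w`, `w(0) = 1`, `Δ` continuous with `Δ(t) ≥ ε > 0` for `t > 0`,
and clipped signal `w_c(t) = min(w(t), 1−μ)`, there exists `t_c > 0` such that for all
`t > t_c`, `(1/(1 − w_c(t)))·(θ̂(t) − w_c(t)·θ̂(0)) = θ`. -/
theorem stmt6 {q : ℕ} (θ : Fin q → ℝ) (γ ε μ : ℝ)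
    (hγ : 0 < γ) (hε : 0 < ε) (hμ : μ ∈ Set.Ioo (0:ℝ) 1)
    (Δ : ℝ → ℝ) (hΔ : Continuous Δ) (hΔε : ∀ t : ℝ, 0 < t → ε ≤ Δ t)
    (θh : ℝ → (Fin q → ℝ)) (w : ℝ → ℝ)
    (hθh : ∀ t : ℝ, 0 ≤ t →
      HasDerivAt θh ((γ * Δ t) • (Δ t • θ - Δ t • θh t)) t)
    (hw : ∀ t : ℝ, 0 ≤ t → HasDerivAt w (-γ * (Δ t) ^ 2 * w t) t)
    (hw0 : w 0 = 1) :
    ∃ tc : ℝ, 0 < tc ∧ ∀ t : ℝ, tc < t →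
      (1 - min (w t) (1 - μ))⁻¹ • (θh t - min (w t) (1 - μ) • θh 0) = θ := by
  obtain ⟨hμ0, hμ1⟩ := hμ
  set a : ℝ → ℝ := fun s => γ * Δ s ^ 2
  have ha : Continuous a := by fun_prop
  have hw_eq : ∀ t, 0 ≤ t → w t = Real.exp (-∫ s in (0 : ℝ)..t, a s) := fun t ht => by
    simpa [hw0] using eq_exp_neg_integral_smul_of_hasDerivAt ha (f := w)
      (fun s hs => by simpa only [a, smul_eq_mul, neg_mul] using hw s hs) ht
  have hθ_eq : ∀ t, 0 ≤ t → θh t - θ = w t • (θh 0 - θ) := fun t ht => by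
    rw [hw_eq t ht]
    refine eq_exp_neg_integral_smul_of_hasDerivAt ha (f := fun t => θh t - θ) (fun s hs => ?_) ht
    convert (hθh s hs).sub_const θ using 1
    module
  have hw_tendsto : Tendsto w atTop (𝓝 0) := by
    refine (Real.tendsto_exp_neg_atTop_nhds_zero.comp
      (tendsto_integral_atTop_of_le (ha.intervalIntegrable 0) (c := γ * ε ^ 2) (by positivity)
        fun s hs => ?_)).congr' ?_
    · show γ * ε ^ 2 ≤ γ * Δ s ^ 2
      gcongr
      exact hΔε s hs
    · filter_upwards [eventually_ge_atTop 0] with t ht using (hw_eq t ht).symm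
  obtain ⟨t₀, ht₀⟩ := eventually_atTop.1
    ((hw_tendsto.eventually (gt_mem_nhds (by linarith : (0 : ℝ) < 1 - μ))).and
      (eventually_ge_atTop 0))
  refine ⟨max t₀ 1, by positivity, fun t ht => ?_⟩
  obtain ⟨hwt, ht0⟩ := ht₀ t (le_of_max_le_left ht.le)
  rw [min_eq_left hwt.le]
  exact inv_one_sub_smul_sub_smul_eq (by linarith) (hθ_eq t ht0)
end

section
/- If the pair (C,A) is observable, where A is block lower-triangular with respect to a partition into blocks of sizes n₁,…,n_N and C is block lower-triangular with the same column partition (C_{ik} = 0 for k > i), then the diagonal pair (C_{NN}, A_{NN}) is observable. -/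
open Matrix

private lemma sum_mulVec_aux {α m n R : Type*} [Fintype n] [NonUnitalNonAssocSemiring R]
    (s : Finset α) (f : α → Matrix m n R) (x : n → R) :
    (∑ a ∈ s, f a) *ᵥ x = ∑ a ∈ s, f a *ᵥ x := by
  induction s using Finset.cons_induction with
  | empty => simp [Matrix.zero_mulVec]
  | cons a s ha ih => rw [Finset.sum_cons, Finset.sum_cons, Matrix.add_mulVec, ih]

/-- If the pair `(C,A)` is observable, `A` block lower-triangular w.r.t. a partition
(encoded by block labels `blk` on states and `cblk` on output rows, with blocks
indexed by `Fin (N+1)`): `A i j = 0` and `C k j = 0` whenever the row-block label is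
smaller than the column-block label, then the last diagonal pair `(C_NN, A_NN)` is
observable. -/
theorem stmt19 {ι κ : Type*} [Fintype ι] [DecidableEq ι] [Fintype κ] [DecidableEq κ]
    {N : ℕ} (blk : ι → Fin (N + 1)) (cblk : κ → Fin (N + 1))
    (A : Matrix ι ι ℝ) (C : Matrix κ ι ℝ)
    (hA : ∀ i j, blk i < blk j → A i j = 0)
    (hC : ∀ k j, cblk k < blk j → C k j = 0)
    (hobs : (Matrix.of fun p : Fin (Fintype.card ι) × κ => fun j : ι =>
        (C * A ^ (p.1 : ℕ)) p.2 j).rank = Fintype.card ι) :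
    (Matrix.of fun p : Fin (Fintype.card {i : ι // blk i = Fin.last N}) ×
        {k : κ // cblk k = Fin.last N} =>
      fun j : {i : ι // blk i = Fin.last N} =>
        ((Matrix.of fun a : {k : κ // cblk k = Fin.last N} =>
            fun b : {i : ι // blk i = Fin.last N} => C a.1 b.1) *
          (Matrix.of fun a b : {i : ι // blk i = Fin.last N} => A a.1 b.1) ^
            (p.1 : ℕ)) p.2 j).rank =
      Fintype.card {i : ι // blk i = Fin.last N} := by
  classical
  set S := {i : ι // blk i = Fin.last N} with hS
  set K := {k : κ // cblk k = Fin.last N} with hK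
  set A' : Matrix S S ℝ := Matrix.of fun a b => A a.1 b.1 with hA'
  set C' : Matrix K S ℝ := Matrix.of fun a b => C a.1 b.1 with hC'
  set M : Matrix (Fin (Fintype.card ι) × κ) ι ℝ :=
    Matrix.of fun p j => (C * A ^ (p.1 : ℕ)) p.2 j with hM
  set T : Matrix (Fin (Fintype.card S) × K) S ℝ :=
    Matrix.of fun p j => (C' * A' ^ (p.1 : ℕ)) p.2 j with hT
  -- powers of A are block lower triangular
  have hAp : ∀ (p : ℕ) (i j : ι), blk i < blk j → (A ^ p) i j = 0 := by
    intro p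
    induction p with
    | zero =>
      intro i j h
      have hij : i ≠ j := fun e => absurd h (by rw [e]; exact lt_irrefl _)
      simp [Matrix.one_apply_ne hij]
    | succ p ih =>
      intro i j h
      rw [pow_succ, Matrix.mul_apply]
      refine Finset.sum_eq_zero fun l _ => ?_
      rcases lt_or_ge (blk l) (blk j) with hl | hl
      · rw [hA l j hl, mul_zero]
      · rw [ih i l (lt_of_lt_of_le h hl), zero_mul]
  -- powers of A restricted to the last block equal powers of A'
  have hApS : ∀ (p : ℕ) (a b : S), (A ^ p) a.1 b.1 = (A' ^ p) a b := by
    intro p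
    induction p with
    | zero =>
      intro a b
      by_cases h : a = b
      · subst h; simp
      · have h' : a.1 ≠ b.1 := fun e => h (Subtype.ext e)
        simp [Matrix.one_apply_ne h, Matrix.one_apply_ne h']
    | succ p ih =>
      intro a b
      rw [pow_succ, pow_succ, Matrix.mul_apply, Matrix.mul_apply]
      rw [← Fintype.sum_subtype_add_sum_subtype (fun l => blk l = Fin.last N)
        (fun l => (A ^ p) a.1 l * A l b.1)]
      have h2 : (∑ l : {l : ι // ¬ blk l = Fin.last N},
          (A ^ p) a.1 l.1 * A l.1 b.1) = 0 := by
        refine Finset.sum_eq_zero fun l _ => ?_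
        have hlt : blk l.1 < blk b.1 := by
          rw [b.2]; exact lt_of_le_of_ne (Fin.le_last _) l.2
        rw [hA l.1 b.1 hlt, mul_zero]
      rw [h2, add_zero]
      refine Finset.sum_congr rfl fun l _ => ?_
      rw [ih a l]
      rfl
  -- rows of C*A^p with non-last block label vanish on last-block columns
  have hrow0 : ∀ (p : ℕ) (k : κ) (j : ι), blk j = Fin.last N →
      cblk k ≠ Fin.last N → (C * A ^ p) k j = 0 := by
    intro p k j hj hk
    rw [Matrix.mul_apply]
    refine Finset.sum_eq_zero fun l _ => ?_
    rcases lt_or_ge (blk l) (blk j) with hl | hl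
    · rw [hAp p l j hl, mul_zero]
    · have hll : blk l = Fin.last N := le_antisymm (Fin.le_last _) (hj ▸ hl)
      have : cblk k < blk l := by
        rw [hll]; exact lt_of_le_of_ne (Fin.le_last _) hk
      rw [hC k l this, zero_mul]
  -- C*A^p restricted to the last blocks equals C'*A'^p
  have hCAS : ∀ (p : ℕ) (k : K) (j : S),
      (C * A ^ p) k.1 j.1 = (C' * A' ^ p) k j := by
    intro p k j
    rw [Matrix.mul_apply, Matrix.mul_apply]
    rw [← Fintype.sum_subtype_add_sum_subtype (fun l => blk l = Fin.last N)
      (fun l => C k.1 l * (A ^ p) l j.1)]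
    have h2 : (∑ l : {l : ι // ¬ blk l = Fin.last N},
        C k.1 l.1 * (A ^ p) l.1 j.1) = 0 := by
      refine Finset.sum_eq_zero fun l _ => ?_
      have hlt : blk l.1 < blk j.1 := by
        rw [j.2]; exact lt_of_le_of_ne (Fin.le_last _) l.2
      rw [hAp p l.1 j.1 hlt, mul_zero]
    rw [h2, add_zero]
    refine Finset.sum_congr rfl fun l _ => ?_
    rw [hApS p l j]
    rfl
  -- injectivity of M.mulVecLin from hobs
  have hMinj : Function.Injective M.mulVecLin := by
    rw [← LinearMap.ker_eq_bot]
    have h1 := LinearMap.finrank_range_add_finrank_ker M.mulVecLin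
    have h2 : Matrix.rank M = Module.finrank ℝ (LinearMap.range M.mulVecLin) := rfl
    rw [← h2, hobs, Module.finrank_pi ℝ] at h1
    have h3 : Module.finrank ℝ (LinearMap.ker M.mulVecLin) = 0 := by omega
    exact Submodule.finrank_eq_zero.mp h3
  -- Cayley-Hamilton: A'^(card S) is a combination of lower powers
  have hCH : A' ^ (Fintype.card S) =
      -(∑ q ∈ Finset.range (Fintype.card S), A'.charpoly.coeff q • A' ^ q) := by
    have h0 := A'.aeval_self_charpoly
    rw [Polynomial.aeval_eq_sum_range] at h0
    rw [A'.charpoly_natDegree_eq_dim, Finset.sum_range_succ] at h0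
    have hc : A'.charpoly.coeff (Fintype.card S) = 1 := by
      have := A'.charpoly_monic.coeff_natDegree
      rwa [A'.charpoly_natDegree_eq_dim] at this
    rw [hc, one_smul] at h0
    linear_combination (norm := abel) h0
  -- main injectivity for T
  have hTinj : Function.Injective T.mulVecLin := by
    rw [← LinearMap.ker_eq_bot, LinearMap.ker_eq_bot']
    intro x hx
    rw [Matrix.mulVecLin_apply] at hx
    have hx' : ∀ q : Fin (Fintype.card S), ∀ k : K,
        ((C' * A' ^ (q : ℕ)).mulVec x) k = 0 := by
      intro q k
      have := congrFun hx (q, k)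
      simpa [hT, Matrix.mulVec, dotProduct] using this
    -- extend to all powers via Cayley-Hamilton
    have hall : ∀ p : ℕ, (C' * A' ^ p).mulVec x = 0 := by
      intro p
      induction p using Nat.strong_induction_on with
      | _ p ih =>
        rcases lt_or_ge p (Fintype.card S) with hp | hp
        · funext k
          simpa using hx' ⟨p, hp⟩ k
        · have hdecomp : A' ^ p = A' ^ (p - Fintype.card S) * A' ^ (Fintype.card S) := by
            rw [← pow_add]
            congr 1
            omega
          have hrw : C' * A' ^ p =
              -(∑ q ∈ Finset.range (Fintype.card S),
                A'.charpoly.coeff q • (C' * A' ^ (p - Fintype.card S + q))) := by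
            rw [hdecomp, ← Matrix.mul_assoc, hCH, Matrix.mul_neg, Matrix.mul_sum]
            congr 1
            refine Finset.sum_congr rfl fun q _ => ?_
            rw [Matrix.mul_smul, Matrix.mul_assoc, ← pow_add]
          have hz : ∀ q ∈ Finset.range (Fintype.card S),
              A'.charpoly.coeff q • ((C' * A' ^ (p - Fintype.card S + q)) *ᵥ x) = 0 := by
            intro q hq
            rw [ih _ (by have := Finset.mem_range.mp hq; omega), smul_zero]
          rw [hrw, Matrix.neg_mulVec, sum_mulVec_aux]
          simp only [Matrix.smul_mulVec]
          rw [Finset.sum_eq_zero hz, neg_zero]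
    -- transfer to the full matrix
    funext j
    let xt : ι → ℝ := fun i => if h : blk i = Fin.last N then x ⟨i, h⟩ else 0
    have hMx : M.mulVec xt = 0 := by
      funext pk
      obtain ⟨p, k⟩ := pk
      show (∑ i : ι, M (p, k) i * xt i) = 0
      rw [← Fintype.sum_subtype_add_sum_subtype (fun i => blk i = Fin.last N)
        (fun i => M (p, k) i * xt i)]
      have h2 : (∑ i : {i : ι // ¬ blk i = Fin.last N}, M (p, k) i.1 * xt i.1) = 0 := by
        refine Finset.sum_eq_zero fun i _ => ?_
        simp [xt, i.2]
      rw [h2, add_zero]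
      by_cases hk : cblk k = Fin.last N
      · calc (∑ i : S, M (p, k) i.1 * xt i.1)
            = ∑ i : S, (C' * A' ^ (p : ℕ)) ⟨k, hk⟩ i * x i := by
              refine Finset.sum_congr rfl fun i _ => ?_
              have he : M (p, k) i.1 = (C' * A' ^ (p : ℕ)) ⟨k, hk⟩ i :=
                hCAS (p : ℕ) ⟨k, hk⟩ i
              rw [he]
              simp [xt, i.2]
          _ = ((C' * A' ^ (p : ℕ)).mulVec x) ⟨k, hk⟩ := rfl
          _ = 0 := by rw [hall (p : ℕ)]; rfl
      · refine Finset.sum_eq_zero fun i _ => ?_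
        have : M (p, k) i.1 = 0 := hrow0 (p : ℕ) k i.1 i.2 hk
        rw [this, zero_mul]
    have hxt : xt = 0 := by
      apply hMinj
      rw [map_zero, Matrix.mulVecLin_apply]
      exact hMx
    have := congrFun hxt j.1
    simpa [xt, j.2] using this
  -- conclude rank
  have h2 : Matrix.rank T = Module.finrank ℝ (LinearMap.range T.mulVecLin) := rfl
  show T.rank = Fintype.card S
  rw [h2, LinearMap.finrank_range_of_inj hTinj, Module.finrank_pi ℝ]
end
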